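/- Assume M is symmetric positive definite, all eigenvalues of M lie in an interval [a, b] with 0, 1 ∉ [a, b], and m < p − 1. Then the aNGMRES(m, p) iterates from any u₀ satisfy ‖r_{jp}‖ ≤ (ε(a, b, m+1) · ‖M‖^p)^j · ‖r₀‖ for all j ≥ 1. -/

import Mathlib

open Matrix Polynomial Set

noncomputable section

/-- Matrix–vector product, landing in Euclidean space. -/
def mulVecE {n : ℕ} (M : Matrix (Fin n) (Fin n) ℝ) (v : EuclideanSpace ℝ (Fin n)) :
    EuclideanSpace ℝ (Fin n) :=
  WithLp.toLp 2 (M.mulVec v)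

/-- Residual `r(u) = A u - b`. -/
def res {n : ℕ} (A : Matrix (Fin n) (Fin n) ℝ) (b u : EuclideanSpace ℝ (Fin n)) :
    EuclideanSpace ℝ (Fin n) :=
  mulVecE A u - b

/-- Richardson fixed-point map `q(u) = (I - A) u + b = M u + b` with `M = I - A`. -/
def fp {n : ℕ} (A : Matrix (Fin n) (Fin n) ℝ) (b u : EuclideanSpace ℝ (Fin n)) :
    EuclideanSpace ℝ (Fin n) :=
  mulVecE (1 - A) u + b

/-- The NGMRES(m) least-squares objective at step `k`:
`β ↦ ‖r(q(u_k)) + Σ_{i=0}^m β_i (r(q(u_k)) - r(u_{k-i}))‖`. -/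
def ngObj {n : ℕ} (A : Matrix (Fin n) (Fin n) ℝ) (b : EuclideanSpace ℝ (Fin n))
    (m : ℕ) (prev : ℕ → EuclideanSpace ℝ (Fin n)) (k : ℕ) (β : Fin (m+1) → ℝ) : ℝ :=
  ‖res A b (fp A b (prev k)) +
    ∑ i : Fin (m+1), β i • (res A b (fp A b (prev k)) - res A b (prev (k - (i : ℕ))))‖

/-- `next` is produced from `prev (k-m), …, prev k` by a single NGMRES(m) step:
`next = q(u_k) + Σ_{i=0}^m β_i (q(u_k) - u_{k-i})` where `β` minimizes the
least-squares objective `ngObj`. -/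
def NGMRESStep {n : ℕ} (A : Matrix (Fin n) (Fin n) ℝ) (b : EuclideanSpace ℝ (Fin n))
    (m : ℕ) (prev : ℕ → EuclideanSpace ℝ (Fin n)) (k : ℕ)
    (next : EuclideanSpace ℝ (Fin n)) : Prop :=
  ∃ β : Fin (m+1) → ℝ,
    (∀ γ : Fin (m+1) → ℝ, ngObj A b m prev k β ≤ ngObj A b m prev k γ) ∧
    next = fp A b (prev k) +
      ∑ i : Fin (m+1), β i • (fp A b (prev k) - prev (k - (i : ℕ)))

/-- The spectral (ℓ²-operator) norm of a matrix. -/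
def opNorm {n : ℕ} (M : Matrix (Fin n) (Fin n) ℝ) : ℝ :=
  ‖(Matrix.toEuclideanCLM (𝕜 := ℝ) M : EuclideanSpace ℝ (Fin n) →L[ℝ] EuclideanSpace ℝ (Fin n))‖

/-- The 2-norm condition number `κ₂(U) = ‖U‖ ‖U⁻¹‖`. -/
def condNum {n : ℕ} (U : Matrix (Fin n) (Fin n) ℝ) : ℝ :=
  opNorm U * opNorm U⁻¹

/-- `ε(a,b,s)`: minimum over real polynomials `p` of degree at most `s` with `p(1) = 1`
of `max_{t ∈ [1/b, 1/a]} |p(t)|`. -/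
def eps (a b : ℝ) (s : ℕ) : ℝ :=
  sInf {t : ℝ | ∃ p : Polynomial ℝ, p.natDegree ≤ s ∧ p.eval 1 = 1 ∧
    t = sSup ((fun x => |p.eval x|) '' Set.Icc (1/b) (1/a))}

/-- `χ(s)`: minimum over real polynomials `p` of degree at most `s` with `p(1) = 1`
of `max_{λ ∈ Σ(M)} |p(λ)|`, where `Σ(M)` is the set of eigenvalues of `M`. -/
def chiSp {n : ℕ} (M : Matrix (Fin n) (Fin n) ℝ) (s : ℕ) : ℝ :=
  sInf {t : ℝ | ∃ p : Polynomial ℝ, p.natDegree ≤ s ∧ p.eval 1 = 1 ∧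
    t = sSup ((fun x => |p.eval x|) '' spectrum ℝ M)}

/-- The Krylov subspace `K_k(A, r) = span{r, Ar, …, A^{k-1} r}`. -/
def Krylov {n : ℕ} (A : Matrix (Fin n) (Fin n) ℝ) (r : EuclideanSpace ℝ (Fin n)) (k : ℕ) :
    Submodule ℝ (EuclideanSpace ℝ (Fin n)) :=
  Submodule.span ℝ (Set.range fun i : Fin k => mulVecE (A ^ (i : ℕ)) r)

/-- The matrix `S_k = [u_{k-m+1}-u_{k-m}, …, u_k-u_{k-1}, q(u_k)-u_k] ∈ ℝ^{n×(m+1)}`. -/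
def Smat {n : ℕ} (A : Matrix (Fin n) (Fin n) ℝ) (b : EuclideanSpace ℝ (Fin n))
    (prev : ℕ → EuclideanSpace ℝ (Fin n)) (k m : ℕ) :
    Matrix (Fin n) (Fin (m+1)) ℝ :=
  Matrix.of fun r c =>
    if (c : ℕ) < m then prev (k - m + c + 1) r - prev (k - m + c) r
    else fp A b (prev k) r - prev k r

/-- `u` is the sequence of aNGMRES(m, p) iterates (with `m = ⊤` giving aNGMRES(∞, p)):
if `p ∤ k` then `u_k = q(u_{k-1})`, and if `p ∣ k` then `u_k` is produced by one
NGMRES(min(m, k-1)) step from `u_{k-1-m_k}, …, u_{k-1}`. -/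
def aNGMRES {n : ℕ} (A : Matrix (Fin n) (Fin n) ℝ) (b : EuclideanSpace ℝ (Fin n))
    (m : ℕ∞) (p : ℕ) (u : ℕ → EuclideanSpace ℝ (Fin n)) : Prop :=
  ∀ k, 1 ≤ k →
    (¬ p ∣ k → u k = fp A b (u (k-1))) ∧
    (p ∣ k → NGMRESStep A b (min m ((k : ℕ∞) - 1)).toNat u (k-1) (u k))

/-!
Between two NGMRES steps the iteration is Richardson's, so `r_{jp+t} = M^t r_{jp}` for `t < p`.
Hence the NGMRES step at `(j+1)p` minimises, over `β`, the norm of a vector `P(M) r_{jp}`, and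
every `q` of degree at most `m+1` with `q(1) = 1` is attained (take `β_i = -q_{i+1}`) with
`P(x) = x^p q(1/x)`. For symmetric `M` the norm of `P(M)` is the maximum of `|P|` on the spectrum,
which lies in `(0, ‖M‖] ∩ [a, c]`, so `‖P(M)‖ ≤ ‖M‖^p max_{[1/c, 1/a]} |q|`. Taking the infimum
over `q` gives the contraction factor `ε(a, c, m+1) ‖M‖^p` per block of `p` steps.
-/

section Residual

variable {n : ℕ} {A : Matrix (Fin n) (Fin n) ℝ} {b : EuclideanSpace ℝ (Fin n)}

lemma mulVecE_eq_toEuclideanCLM (X : Matrix (Fin n) (Fin n) ℝ) (v : EuclideanSpace ℝ (Fin n)) :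
    mulVecE X v = Matrix.toEuclideanCLM (𝕜 := ℝ) X v := rfl

lemma mulVecE_mul (X Y : Matrix (Fin n) (Fin n) ℝ) (v : EuclideanSpace ℝ (Fin n)) :
    mulVecE (X * Y) v = mulVecE X (mulVecE Y v) := by
  simp only [mulVecE, WithLp.ofLp_toLp, Matrix.mulVec_mulVec]

lemma res_fp (w : EuclideanSpace ℝ (Fin n)) :
    res A b (fp A b w) = mulVecE (1 - A) (res A b w) := by
  simp only [res, fp, mulVecE_eq_toEuclideanCLM, map_sub, map_add, map_one,
    _root_.sub_apply, one_apply_eq_self]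
  abel

lemma res_add_sum_smul_sub {ι : Type*} (s : Finset ι) (x : EuclideanSpace ℝ (Fin n))
    (y : ι → EuclideanSpace ℝ (Fin n)) (β : ι → ℝ) :
    res A b (x + ∑ i ∈ s, β i • (x - y i)) =
      res A b x + ∑ i ∈ s, β i • (res A b x - res A b (y i)) := by
  simp only [res, mulVecE_eq_toEuclideanCLM, map_add, map_sum, map_smul, map_sub,
    sub_sub_sub_cancel_right]
  abel

lemma NGMRESStep.norm_res_le {m k : ℕ} {prev : ℕ → EuclideanSpace ℝ (Fin n)}
    {next : EuclideanSpace ℝ (Fin n)} (h : NGMRESStep A b m prev k next)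
    (γ : Fin (m+1) → ℝ) : ‖res A b next‖ ≤ ngObj A b m prev k γ := by
  obtain ⟨β, hβ, rfl⟩ := h
  rw [res_add_sum_smul_sub]
  exact hβ γ

lemma res_add_of_forall_eq_fp {u : ℕ → EuclideanSpace ℝ (Fin n)} {s t : ℕ}
    (h : ∀ i < t, u (s + i + 1) = fp A b (u (s + i))) :
    res A b (u (s + t)) = mulVecE ((1 - A) ^ t) (res A b (u s)) := by
  induction t with
  | zero => simp [mulVecE_eq_toEuclideanCLM]
  | succ t ih =>
    rw [← add_assoc, h t t.lt_succ_self, res_fp, ih fun i hi => h i (hi.trans t.lt_succ_self),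
      ← mulVecE_mul, ← pow_succ']

end Residual

lemma add_sum_range_neg_smul_sub {R E : Type*} [CommRing R] [AddCommGroup E] [Module R E]
    (c : ℕ → R) (w : ℕ → E) (N : ℕ) (hc : ∑ i ∈ Finset.range (N + 1), c i = 1) :
    w 0 + ∑ i ∈ Finset.range N, (-c (i + 1)) • (w 0 - w (i + 1)) =
      ∑ i ∈ Finset.range (N + 1), c i • w i := by
  rw [Finset.sum_range_succ'] at hc ⊢
  rw [← eq_sub_iff_add_eq'] at hc
  simp only [neg_smul, smul_sub, Finset.sum_neg_distrib, Finset.sum_sub_distrib, ← Finset.sum_smul,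
    hc, sub_smul, one_smul]
  abel

lemma Polynomial.eval_sum_range_C_coeff_mul_X_pow_sub {K : Type*} [Field K] {q : K[X]} {N p : ℕ}
    (hq : q.natDegree < N) (hN : N ≤ p + 1) {x : K} (hx : x ≠ 0) :
    (∑ i ∈ Finset.range N, C (q.coeff i) * X ^ (p - i)).eval x = x ^ p * q.eval x⁻¹ := by
  rw [eval_eq_sum_range' hq, eval_finsetSum, Finset.mul_sum]
  refine Finset.sum_congr rfl fun i hi => ?_
  have hip : i ≤ p := by have := Finset.mem_range.mp hi; omega
  rw [eval_mul, eval_C, eval_pow, eval_X, pow_sub₀ x hx hip, inv_pow]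
  ring

lemma mulVecE_aeval_sum_C_mul_X_pow {n : ℕ} (M : Matrix (Fin n) (Fin n) ℝ) (s : Finset ℕ)
    (c : ℕ → ℝ) (d : ℕ → ℕ) (v : EuclideanSpace ℝ (Fin n)) :
    mulVecE (aeval M (∑ i ∈ s, C (c i) * X ^ d i)) v = ∑ i ∈ s, c i • mulVecE (M ^ d i) v := by
  simp only [mulVecE_eq_toEuclideanCLM, map_sum, map_mul, aeval_C, aeval_X_pow,
    Algebra.algebraMap_eq_smul_one, smul_mul_assoc, one_mul, map_smul, _root_.sum_apply,
    _root_.smul_apply]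

lemma norm_mulVecE_le {n : ℕ} (X : Matrix (Fin n) (Fin n) ℝ) (v : EuclideanSpace ℝ (Fin n)) :
    ‖mulVecE X v‖ ≤ opNorm X * ‖v‖ :=
  (Matrix.toEuclideanCLM (𝕜 := ℝ) X).le_opNorm v

lemma opNorm_nonneg {n : ℕ} (X : Matrix (Fin n) (Fin n) ℝ) : 0 ≤ opNorm X := norm_nonneg _

section Spectral

open scoped Matrix.Norms.L2Operator

variable {n : ℕ} {M : Matrix (Fin n) (Fin n) ℝ}

lemma Matrix.IsHermitian.opNorm_aeval_le (hM : M.IsHermitian) (P : ℝ[X]) {C : ℝ} (hC : 0 ≤ C)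
    (h : ∀ x ∈ spectrum ℝ M, |P.eval x| ≤ C) : opNorm (aeval M P) ≤ C := by
  rw [opNorm, ← Matrix.cstar_norm_def, ← cfc_polynomial P M hM.isSelfAdjoint]
  exact norm_cfc_le hC h

lemma Matrix.IsHermitian.le_opNorm_of_mem_spectrum (hM : M.IsHermitian) {x : ℝ}
    (hx : x ∈ spectrum ℝ M) : x ≤ opNorm M := by
  have := norm_apply_le_norm_cfc id M hx (ha := hM.isSelfAdjoint)
  rw [cfc_id ℝ M hM.isSelfAdjoint] at this
  exact (le_abs_self x).trans this

end Spectral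

lemma Matrix.PosDef.pos_of_mem_spectrum {n : ℕ} {M : Matrix (Fin n) (Fin n) ℝ} (hM : M.PosDef)
    {x : ℝ} (hx : x ∈ spectrum ℝ M) : 0 < x := by
  obtain ⟨i, rfl⟩ := hM.1.spectrum_real_eq_range_eigenvalues ▸ hx
  exact hM.eigenvalues_pos i

lemma abs_eval_le_sSup_image {q : ℝ[X]} {s : Set ℝ} (hs : IsCompact s) {x : ℝ} (hx : x ∈ s) :
    |q.eval x| ≤ sSup ((fun x => |q.eval x|) '' s) :=
  le_csSup (hs.bddAbove_image (by fun_prop)) (mem_image_of_mem _ hx)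

lemma le_sInf_mul_of_forall_le_mul {S : Set ℝ} (hS : S.Nonempty) {x D : ℝ} (hD : 0 ≤ D)
    (h : ∀ t ∈ S, x ≤ t * D) : x ≤ sInf S * D := by
  rw [mul_comm, ← smul_eq_mul, ← Real.sInf_smul_of_nonneg hD]
  refine le_csInf hS.smul_set ?_
  rintro _ ⟨t, ht, rfl⟩
  exact (h t ht).trans_eq (mul_comm t D)

lemma eps_nonneg (a c : ℝ) (s : ℕ) : 0 ≤ eps a c s := by
  refine Real.sInf_nonneg ?_
  rintro _ ⟨q, -, -, rfl⟩
  refine Real.sSup_nonneg ?_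
  rintro _ ⟨x, -, rfl⟩
  exact abs_nonneg _

lemma Matrix.PosDef.opNorm_aeval_sum_C_coeff_mul_X_pow_sub_le {n : ℕ}
    {M : Matrix (Fin n) (Fin n) ℝ} (hM : M.PosDef) {a c : ℝ} (h0 : (0 : ℝ) ∉ Icc a c)
    (hspec : spectrum ℝ M ⊆ Icc a c) {q : ℝ[X]} {N p : ℕ} (hq : q.natDegree < N)
    (hN : N ≤ p + 1) :
    opNorm (aeval M (∑ i ∈ Finset.range N, C (q.coeff i) * X ^ (p - i))) ≤
      sSup ((fun x => |q.eval x|) '' Icc (1 / c) (1 / a)) * opNorm M ^ p := by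
  have hsup : 0 ≤ sSup ((fun x => |q.eval x|) '' Icc (1 / c) (1 / a)) :=
    Real.sSup_nonneg (by rintro _ ⟨x, -, rfl⟩; exact abs_nonneg _)
  refine hM.1.opNorm_aeval_le _ (mul_nonneg hsup (pow_nonneg (opNorm_nonneg M) p)) fun x hx => ?_
  have hx0 : 0 < x := hM.pos_of_mem_spectrum hx
  obtain ⟨hax, hxc⟩ := hspec hx
  have ha : 0 < a := lt_of_not_ge fun ha => h0 ⟨ha, hx0.le.trans hxc⟩
  have hinv : x⁻¹ ∈ Icc (1 / c) (1 / a) := by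
    rw [one_div, one_div]
    exact ⟨inv_anti₀ hx0 hxc, inv_anti₀ ha hax⟩
  rw [eval_sum_range_C_coeff_mul_X_pow_sub hq hN hx0.ne', abs_mul, abs_pow, abs_of_pos hx0,
    mul_comm]
  gcongr
  · exact abs_eval_le_sSup_image isCompact_Icc hinv
  · exact hM.1.le_opNorm_of_mem_spectrum hx

section aNGMRES

variable {n m p : ℕ} {A : Matrix (Fin n) (Fin n) ℝ} {b : EuclideanSpace ℝ (Fin n)}
  {u : ℕ → EuclideanSpace ℝ (Fin n)}

lemma aNGMRES.res_mul_add (hu : aNGMRES A b m p u) (j : ℕ) {t : ℕ} (ht : t < p) :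
    res A b (u (j * p + t)) = mulVecE ((1 - A) ^ t) (res A b (u (j * p))) := by
  refine res_add_of_forall_eq_fp fun i hi => ?_
  have hndvd : ¬ p ∣ j * p + i + 1 := by
    rw [add_assoc, Nat.dvd_add_right (dvd_mul_left p j)]
    exact Nat.not_dvd_of_pos_of_lt i.succ_pos (by omega)
  exact (hu _ (by omega)).1 hndvd

lemma aNGMRES.ngmresStep (hu : aNGMRES A b m p u) (hmp : m < p) (j : ℕ) :
    NGMRESStep A b m u ((j + 1) * p - 1) (u ((j + 1) * p)) := by
  have hp : p ≤ (j + 1) * p := Nat.le_mul_of_pos_left p j.succ_pos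
  have hk : 1 ≤ (j + 1) * p := by omega
  have hmk : (min (m : ℕ∞) (((j + 1) * p : ℕ) - 1)).toNat = m := by
    have hcast : (((j + 1) * p : ℕ) : ℕ∞) - 1 = (((j + 1) * p - 1 : ℕ) : ℕ∞) := by
      rw [ENat.natCast_sub, Nat.cast_one]
    rw [hcast, min_eq_left (by exact_mod_cast (by omega)), ENat.toNat_natCast]
  simpa only [hmk] using (hu _ hk).2 (dvd_mul_left p (j + 1))

lemma aNGMRES.norm_res_le_opNorm_aeval (hu : aNGMRES A b m p u) (hmp : m < p) (j : ℕ)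
    {q : ℝ[X]} (hq : q.natDegree < m + 2) (hq1 : q.eval 1 = 1) :
    ‖res A b (u ((j + 1) * p))‖ ≤
      opNorm (aeval (1 - A) (∑ i ∈ Finset.range (m + 2), C (q.coeff i) * X ^ (p - i))) *
        ‖res A b (u (j * p))‖ := by
  set ρ := res A b (u (j * p))
  set w : ℕ → EuclideanSpace ℝ (Fin n) := fun i => mulVecE ((1 - A) ^ (p - i)) ρ
  have hk : (j + 1) * p - 1 = j * p + (p - 1) := by rw [add_mul, one_mul]; omega
  have hprev : ∀ i : Fin (m + 1), res A b (u ((j + 1) * p - 1 - i)) = w (i + 1) := fun i => by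
    rw [hk, show j * p + (p - 1) - i = j * p + (p - (i + 1)) by omega]
    exact hu.res_mul_add j (by omega)
  have hfp : res A b (fp A b (u ((j + 1) * p - 1))) = w 0 := by
    rw [res_fp, hk, hu.res_mul_add j (by omega), ← mulVecE_mul, ← pow_succ',
      Nat.sub_add_cancel (by omega : 1 ≤ p)]
    rfl
  have hcoeff : ∑ i ∈ Finset.range (m + 2), q.coeff i = 1 := by
    simpa using (eval_eq_sum_range' hq (1 : ℝ)).symm.trans hq1
  calc ‖res A b (u ((j + 1) * p))‖
      ≤ ngObj A b m u ((j + 1) * p - 1) fun i => -q.coeff (i + 1) :=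
        (hu.ngmresStep hmp j).norm_res_le _
    _ = ‖∑ i ∈ Finset.range (m + 2), q.coeff i • w i‖ := by
        rw [ngObj, hfp]
        simp only [hprev]
        rw [Fin.sum_univ_eq_sum_range (fun i => -q.coeff (i + 1) • (w 0 - w (i + 1))),
          add_sum_range_neg_smul_sub _ _ _ hcoeff]
    _ = ‖mulVecE (aeval (1 - A) (∑ i ∈ Finset.range (m + 2), C (q.coeff i) * X ^ (p - i))) ρ‖ := by
        rw [mulVecE_aeval_sum_C_mul_X_pow]
    _ ≤ _ := norm_mulVecE_le _ _

lemma aNGMRES.norm_res_succ_mul_le (hu : aNGMRES A b m p u) (hmp : m < p) (hPD : (1 - A).PosDef)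
    {a c : ℝ} (h0 : (0 : ℝ) ∉ Icc a c) (hspec : spectrum ℝ (1 - A) ⊆ Icc a c) (j : ℕ) :
    ‖res A b (u ((j + 1) * p))‖ ≤
      eps a c (m + 1) * opNorm (1 - A) ^ p * ‖res A b (u (j * p))‖ := by
  rw [mul_assoc, eps]
  refine le_sInf_mul_of_forall_le_mul ?_
    (mul_nonneg (pow_nonneg (opNorm_nonneg _) p) (norm_nonneg _)) ?_
  · exact ⟨_, 1, by simp, by simp, rfl⟩
  rintro _ ⟨q, hq, hq1, rfl⟩
  calc ‖res A b (u ((j + 1) * p))‖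
      ≤ opNorm (aeval (1 - A) (∑ i ∈ Finset.range (m + 2), C (q.coeff i) * X ^ (p - i))) *
          ‖res A b (u (j * p))‖ := hu.norm_res_le_opNorm_aeval hmp j (by omega) hq1
    _ ≤ sSup ((fun x => |q.eval x|) '' Icc (1 / c) (1 / a)) * opNorm (1 - A) ^ p *
          ‖res A b (u (j * p))‖ := by
        gcongr
        exact hPD.opNorm_aeval_sum_C_coeff_mul_X_pow_sub_le h0 hspec (by omega) (by omega)
    _ = _ := mul_assoc _ _ _

lemma aNGMRES.norm_res_mul_le (hu : aNGMRES A b m p u) (hmp : m < p) (hPD : (1 - A).PosDef)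
    {a c : ℝ} (h0 : (0 : ℝ) ∉ Icc a c) (hspec : spectrum ℝ (1 - A) ⊆ Icc a c) (j : ℕ) :
    ‖res A b (u (j * p))‖ ≤ (eps a c (m + 1) * opNorm (1 - A) ^ p) ^ j * ‖res A b (u 0)‖ := by
  induction j with
  | zero => simp
  | succ j ih =>
    calc ‖res A b (u ((j + 1) * p))‖
        ≤ eps a c (m + 1) * opNorm (1 - A) ^ p * ‖res A b (u (j * p))‖ :=
          hu.norm_res_succ_mul_le hmp hPD h0 hspec j
      _ ≤ eps a c (m + 1) * opNorm (1 - A) ^ p *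
            ((eps a c (m + 1) * opNorm (1 - A) ^ p) ^ j * ‖res A b (u 0)‖) := by
          gcongr
          exact mul_nonneg (eps_nonneg a c _) (pow_nonneg (opNorm_nonneg _) p)
      _ = _ := by ring

end aNGMRES

theorem stmt_15_general {n m p : ℕ} (hmp : m < p - 1) (A : Matrix (Fin n) (Fin n) ℝ)
    (hPD : ((1 : Matrix (Fin n) (Fin n) ℝ) - A).PosDef)
    (a c : ℝ)
    (h0 : (0 : ℝ) ∉ Set.Icc a c)
    (hspec : spectrum ℝ ((1 : Matrix (Fin n) (Fin n) ℝ) - A) ⊆ Set.Icc a c)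
    (b : EuclideanSpace ℝ (Fin n)) (u : ℕ → EuclideanSpace ℝ (Fin n))
    (hu : aNGMRES A b (m : ℕ∞) p u) :
    ∀ j : ℕ, 1 ≤ j →
      ‖res A b (u (j * p))‖ ≤
        (eps a c (m+1) * opNorm ((1 : Matrix (Fin n) (Fin n) ℝ) - A) ^ p) ^ j *
          ‖res A b (u 0)‖ :=
  fun j _ => hu.norm_res_mul_le (by omega) hPD h0 hspec j

/-- aNGMRES(m, p), m < p-1, SPD case:
`‖r_{jp}‖ ≤ (ε(a, b, m+1) ‖M‖^p)^j ‖r₀‖`. -/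
theorem stmt_15 {n m p : ℕ} (hmp : m < p - 1) (A : Matrix (Fin n) (Fin n) ℝ)
    (hA : IsUnit A) (hPD : ((1 : Matrix (Fin n) (Fin n) ℝ) - A).PosDef)
    (a c : ℝ) (hac : a < c)
    (h0 : (0 : ℝ) ∉ Set.Icc a c) (h1 : (1 : ℝ) ∉ Set.Icc a c)
    (hspec : spectrum ℝ ((1 : Matrix (Fin n) (Fin n) ℝ) - A) ⊆ Set.Icc a c)
    (b : EuclideanSpace ℝ (Fin n)) (u : ℕ → EuclideanSpace ℝ (Fin n))
    (hu : aNGMRES A b (m : ℕ∞) p u) :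
    ∀ j : ℕ, 1 ≤ j →
      ‖res A b (u (j * p))‖ ≤
        (eps a c (m+1) * opNorm ((1 : Matrix (Fin n) (Fin n) ℝ) - A) ^ p) ^ j *
          ‖res A b (u 0)‖ :=
  stmt_15_general hmp A hPD a c h0 hspec b u hu

end
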